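/- arXiv:1402.0423 — 2 statements merged into one kernel-verified Lean document; each statement's English description precedes it below -/
import Mathlib

section
/- (Gascuel–Caraux lower bound, second case) If 1 ≤ r ≤ k and r/k ≥ 1/2, then the expected value of the r-th order statistic satisfies E[X_{(r:k)}] ≥ μ − σ·√(k(k−r)/(2r²)). -/
/-!
Sort the sample as `x₍₁₎ ≤ ⋯ ≤ x₍ₖ₎`. The `r` smallest values are at most `x₍ᵣ₎`, and by
Cauchy–Schwarz the `k - r` largest exceed `μ` in total by at most
`√(k - r) · √(∑ᵢ (xᵢ - μ)⁺²)`. Taking expectations, Jensen's inequality for `√` and the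
symmetry identity `E[(Xᵢ - μ)⁺²] = σ² / 2` give `r (μ - E[X₍ᵣ₎]) ≤ √(k - r) · √(k σ² / 2)`.
-/

open MeasureTheory ProbabilityTheory

open Classical in
/-- The `r`-th order statistic (with `1 ≤ r ≤ k`) of `X₁, …, X_k` at a sample point `ω`:
the `(r−1)`-indexed entry of the sorted list `(X₁(ω), …, X_k(ω))`. -/
noncomputable def orderStat {Ω : Type*} {k : ℕ} (X : Fin k → Ω → ℝ) (r : ℕ) (ω : Ω) : ℝ :=
  ((List.ofFn fun i => X i ω).mergeSort (fun a b => decide (a ≤ b))).getD (r - 1) 0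

lemma sq_eq_posPart_sq_add_posPart_neg_sq (a : ℝ) : a ^ 2 = a⁺ ^ 2 + (-a)⁺ ^ 2 := by
  rcases le_total a 0 with h | h
  · simp [posPart_eq_zero.2 h, posPart_eq_self.2 (neg_nonneg.2 h)]
  · simp [posPart_eq_self.2 h, posPart_eq_zero.2 (neg_nonpos.2 h)]

namespace List

lemma sq_sum_le_length_mul_sum_sq (l : List ℝ) :
    l.sum ^ 2 ≤ l.length * (l.map (· ^ 2)).sum := by
  have h := sq_sum_le_card_mul_sum_sq (s := Finset.univ) (f := fun i : Fin l.length => l[i])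
  have e : ∀ f : ℝ → ℝ, (l.map f).sum = ∑ i : Fin l.length, f l[i] := fun f => by
    rw [← List.sum_ofFn]; simp only [Fin.getElem_fin, List.ofFn_getElem_eq_map]
  rw [e, show l.sum = ∑ i : Fin l.length, l[i] by simp]
  simpa using h

lemma sum_le_length_mul_add_sqrt_mul_sqrt (l : List ℝ) (m : ℝ) :
    l.sum ≤ l.length * m + √l.length * √((l.map fun x => (x - m)⁺ ^ 2).sum) := by
  have hshift : (l.map fun x => x - m).sum = l.sum - l.length * m := by
    induction l with
    | nil => simp
    | cons a l ih => simp only [List.map_cons, List.sum_cons, List.length_cons, ih]; push_cast; ring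
  set p := l.map fun x => (x - m)⁺
  have hp : 0 ≤ p.sum := List.sum_nonneg (by simp [p])
  have hsub : l.sum - l.length * m ≤ p.sum := by
    rw [← hshift]
    exact List.sum_le_sum fun x _ => le_posPart _
  calc l.sum ≤ l.length * m + √(p.sum ^ 2) := by rw [Real.sqrt_sq hp]; linarith
    _ ≤ l.length * m + √(p.length * (p.map (· ^ 2)).sum) := by
      gcongr; exact p.sq_sum_le_length_mul_sum_sq
    _ = _ := by rw [Real.sqrt_mul (Nat.cast_nonneg _)]; simp [p, Function.comp_def]

lemma Pairwise.sum_le_mul_getD_add_sqrt {l : List ℝ} (hl : l.Pairwise (· ≤ ·)) {r : ℕ} (hr : 1 ≤ r)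
    (hrl : r ≤ l.length) (m : ℝ) :
    l.sum ≤ r * l.getD (r - 1) 0 + (l.length - r : ℕ) * m +
      √(l.length - r : ℕ) * √((l.map fun x => (x - m)⁺ ^ 2).sum) := by
  have htake : ∀ x ∈ l.take r, x ≤ l.getD (r - 1) 0 := by
    intro x hx
    obtain ⟨j, hj, rfl⟩ := List.mem_iff_getElem.1 hx
    simp only [List.length_take] at hj
    rw [List.getElem_take, List.getD_eq_getElem _ _ (by omega)]
    exact hl.rel_get_of_le (a := ⟨j, by omega⟩) (b := ⟨r - 1, by omega⟩) (by simp; omega)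
  have hdrop : ((l.drop r).map fun x => (x - m)⁺ ^ 2).sum ≤
      (l.map fun x => (x - m)⁺ ^ 2).sum := by
    conv_rhs => rw [← List.take_append_drop r l]
    simp only [List.map_append, List.sum_append, le_add_iff_nonneg_left]
    exact List.sum_nonneg fun x hx => by
      obtain ⟨y, -, rfl⟩ := List.mem_map.1 hx; positivity
  calc l.sum = (l.take r).sum + (l.drop r).sum := by rw [← List.sum_append, List.take_append_drop]
    _ ≤ r * l.getD (r - 1) 0 + ((l.drop r).length * m +
        √(l.drop r).length * √(((l.drop r).map fun x => (x - m)⁺ ^ 2).sum)) := by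
      gcongr
      · simpa [List.length_take, hrl] using List.sum_le_card_nsmul _ _ htake
      · exact List.sum_le_length_mul_add_sqrt_mul_sqrt _ m
    _ ≤ _ := by rw [List.length_drop, ← add_assoc]; gcongr

end List

lemma sum_le_orderStat {Ω : Type*} {k : ℕ} (X : Fin k → Ω → ℝ) {r : ℕ} (hr : 1 ≤ r)
    (hrk : r ≤ k) (m : ℝ) (ω : Ω) :
    ∑ i, X i ω ≤ r * orderStat X r ω + (k - r : ℕ) * m +
      √(k - r : ℕ) * √(∑ i, (X i ω - m)⁺ ^ 2) := by
  obtain ⟨l, hperm, hsorted, hl⟩ : ∃ l : List ℝ, l.Perm (List.ofFn fun i => X i ω) ∧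
      l.Pairwise (· ≤ ·) ∧ orderStat X r ω = l.getD (r - 1) 0 :=
    ⟨_, List.mergeSort_perm _ _, List.pairwise_mergeSort' _ _, rfl⟩
  have hlen : l.length = k := by simp [hperm.length_eq]
  have h := hsorted.sum_le_mul_getD_add_sqrt hr (by omega) m
  rw [hperm.sum_eq, (hperm.map _).sum_eq, hlen, ← hl] at h
  simpa only [List.sum_ofFn, List.map_ofFn, Function.comp_apply] using h

section

variable {Ω : Type*} [MeasurableSpace Ω] {P : Measure Ω}

lemma MeasureTheory.MemLp.integrable_posPart_sub_sq [IsFiniteMeasure P] {Y : Ω → ℝ}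
    (hY : MemLp Y 2 P) (m : ℝ) : Integrable (fun ω => (Y ω - m)⁺ ^ 2) P := by
  refine ((hY.sub (memLp_const m)).integrable_sq).mono ?_ (.of_forall fun ω => ?_)
  · exact ((continuous_posPart.comp (continuous_sub_right m)).pow 2).comp_aestronglyMeasurable
      hY.aestronglyMeasurable
  · simp only [Real.norm_eq_abs, abs_pow, sq_abs, Pi.sub_apply]
    rw [sq_eq_posPart_sq_add_posPart_neg_sq (Y ω - m)]
    exact le_add_of_nonneg_right (sq_nonneg _)

lemma integral_posPart_sub_sq_of_identDistrib [IsFiniteMeasure P] {Y : Ω → ℝ} {m : ℝ}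
    (hY : MemLp Y 2 P) (hsym : IdentDistrib (fun ω => 2 * m - Y ω) Y P P) :
    ∫ ω, (Y ω - m)⁺ ^ 2 ∂P = (∫ ω, (Y ω - m) ^ 2 ∂P) / 2 := by
  have hφ : Measurable fun y : ℝ => (y - m)⁺ ^ 2 := by fun_prop
  have hrefl : ∫ ω, (2 * m - Y ω - m)⁺ ^ 2 ∂P = ∫ ω, (Y ω - m)⁺ ^ 2 ∂P :=
    (hsym.comp hφ).integral_eq
  have hsplit : ∀ ω, (Y ω - m) ^ 2 = (Y ω - m)⁺ ^ 2 + (2 * m - Y ω - m)⁺ ^ 2 := fun ω => by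
    rw [sq_eq_posPart_sq_add_posPart_neg_sq (Y ω - m)]; ring_nf
  have hY' : MemLp (fun ω => 2 * m - Y ω) 2 P := (memLp_const _).sub hY
  rw [integral_congr_ae (.of_forall hsplit), integral_add (hY.integrable_posPart_sub_sq m)
    (hY'.integrable_posPart_sub_sq m), hrefl]
  ring

lemma MeasureTheory.Integrable.sqrt [IsFiniteMeasure P] {Z : Ω → ℝ} (hZ : Integrable Z P) :
    Integrable (fun ω => √(Z ω)) P := by
  refine ((integrable_const 1).add hZ.norm).mono
    (Real.continuous_sqrt.comp_aestronglyMeasurable hZ.aestronglyMeasurable)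
    (.of_forall fun ω => ?_)
  simp only [Real.norm_eq_abs, Pi.add_apply]
  rw [abs_of_nonneg (by positivity : (0 : ℝ) ≤ 1 + |Z ω|), abs_of_nonneg (Real.sqrt_nonneg _),
    Real.sqrt_le_iff]
  exact ⟨by positivity, by nlinarith [abs_nonneg (Z ω), le_abs_self (Z ω)]⟩

lemma integral_sqrt_le_sqrt_integral [IsProbabilityMeasure P] {Z : Ω → ℝ} (hZ : 0 ≤ᵐ[P] Z)
    (hZi : Integrable Z P) : ∫ ω, √(Z ω) ∂P ≤ √(∫ ω, Z ω ∂P) :=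
  Real.strictConcaveOn_sqrt.concaveOn.le_map_integral Real.continuous_sqrt.continuousOn
    isClosed_Ici hZ hZi hZi.sqrt

lemma sum_integral_le_integral_orderStat [IsProbabilityMeasure P] {k : ℕ} {X : Fin k → Ω → ℝ}
    (hX : ∀ i, MemLp (X i) 2 P) {r : ℕ} (hO : Integrable (orderStat X r) P) (hr : 1 ≤ r)
    (hrk : r ≤ k) (m : ℝ) :
    ∑ i, ∫ ω, X i ω ∂P ≤ r * ∫ ω, orderStat X r ω ∂P + (k - r : ℕ) * m +
      √(k - r : ℕ) * √(∑ i, ∫ ω, (X i ω - m)⁺ ^ 2 ∂P) := by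
  set Z : Ω → ℝ := fun ω => ∑ i, (X i ω - m)⁺ ^ 2
  have hXi : ∀ i, Integrable (X i) P := fun i => (hX i).integrable one_le_two
  have hZi : Integrable Z P := integrable_finsetSum _ fun i _ => (hX i).integrable_posPart_sub_sq m
  have hmono : ∫ ω, ∑ i, X i ω ∂P ≤
      ∫ ω, (r * orderStat X r ω + (k - r : ℕ) * m + √(k - r : ℕ) * √(Z ω)) ∂P :=
    integral_mono (integrable_finsetSum _ fun i _ => hXi i)
      (((hO.const_mul _).fun_add (integrable_const _)).fun_add (hZi.sqrt.const_mul _))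
      (sum_le_orderStat X hr hrk m)
  rw [integral_finsetSum _ fun i _ => hXi i, integral_add ((hO.const_mul _).fun_add
    (integrable_const _)) (hZi.sqrt.const_mul _), integral_add (hO.const_mul _)
    (integrable_const _), integral_const, integral_const_mul, integral_const_mul,
    probReal_univ, one_smul] at hmono
  have hJ := integral_sqrt_le_sqrt_integral (.of_forall fun ω => by positivity) hZi
  rw [integral_finsetSum _ fun i _ => (hX i).integrable_posPart_sub_sq m] at hJ
  grw [← hJ]
  exact hmono

end

theorem gascuel_caraux_lower_second_general {Ω : Type*} [MeasureSpace Ω]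
    [IsProbabilityMeasure (volume : Measure Ω)]
    {k : ℕ} (X : Fin k → Ω → ℝ) (μ σ : ℝ) (hσ : 0 ≤ σ)
    (hL2 : ∀ i, MemLp (X i) 2 volume)
    (hmean : ∀ i, ∫ ω, X i ω = μ)
    (hvar : ∀ i, variance (X i) volume = σ ^ 2)
    (hsym : ∀ i, IdentDistrib (fun ω => 2 * μ - X i ω) (X i) volume volume)
    (hint : ∀ r, Integrable (orderStat X r) volume)
    (r : ℕ) (hr1 : 1 ≤ r) (hrk : r ≤ k) :
    μ - σ * Real.sqrt ((k : ℝ) * ((k : ℝ) - (r : ℝ)) / (2 * (r : ℝ) ^ 2)) ≤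
      ∫ ω, orderStat X r ω := by
  have hupper : ∀ i, ∫ ω, (X i ω - μ)⁺ ^ 2 = σ ^ 2 / 2 := fun i => by
    rw [integral_posPart_sub_sq_of_identDistrib (hL2 i) (hsym i), ← hvar i,
      variance_eq_integral (hL2 i).aemeasurable, hmean i]
  have hsum := sum_integral_le_integral_orderStat hL2 (hint r) hr1 hrk μ
  simp only [hmean, hupper, Finset.sum_const, Finset.card_univ, Fintype.card_fin,
    nsmul_eq_mul] at hsum
  push_cast [Nat.cast_sub hrk] at hsum
  have hrpos : (0 : ℝ) < r := by exact_mod_cast hr1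
  have hkr : (0 : ℝ) ≤ k - r := by rw [sub_nonneg]; exact_mod_cast hrk
  have hs : σ * √(k * (k - r) / (2 * r ^ 2)) = √(k - r) * √(k * (σ ^ 2 / 2)) / r :=
    calc σ * √(k * (k - r) / (2 * r ^ 2)) = √(σ ^ 2 * (k * (k - r) / (2 * r ^ 2))) := by
          rw [Real.sqrt_mul (sq_nonneg σ), Real.sqrt_sq hσ]
      _ = √((k - r) * (k * (σ ^ 2 / 2)) / r ^ 2) := by congr 1; field_simp
      _ = _ := by rw [Real.sqrt_div' _ (sq_nonneg _), Real.sqrt_sq hrpos.le, Real.sqrt_mul hkr]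
  rw [hs, sub_le_comm, le_div_iff₀ hrpos]
  linarith

/-- Gascuel–Caraux lower bound, second case: if `1 ≤ r ≤ k` and `r/k ≥ 1/2`, then
`E[X_{(r:k)}] ≥ μ − σ·√(k(k−r)/(2r²))`. -/
theorem gascuel_caraux_lower_second {Ω : Type*} [MeasureSpace Ω]
    [IsProbabilityMeasure (volume : Measure Ω)]
    {k : ℕ} (hk : 1 ≤ k) (X : Fin k → Ω → ℝ) (μ σ : ℝ) (hσ : 0 ≤ σ)
    (hmeas : ∀ i, AEMeasurable (X i) volume)
    (hL2 : ∀ i, MemLp (X i) 2 volume)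
    (hident : ∀ i j, IdentDistrib (X i) (X j) volume volume)
    (hmean : ∀ i, ∫ ω, X i ω = μ)
    (hvar : ∀ i, variance (X i) volume = σ ^ 2)
    (hsym : ∀ i, IdentDistrib (fun ω => 2 * μ - X i ω) (X i) volume volume)
    (hint : ∀ r, Integrable (orderStat X r) volume)
    (r : ℕ) (hr1 : 1 ≤ r) (hrk : r ≤ k)
    (hhalf : 1 / 2 ≤ (r : ℝ) / (k : ℝ)) :
    μ - σ * Real.sqrt ((k : ℝ) * ((k : ℝ) - (r : ℝ)) / (2 * (r : ℝ) ^ 2)) ≤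
      ∫ ω, orderStat X r ω :=
  gascuel_caraux_lower_second_general X μ σ hσ hL2 hmean hvar hsym hint r hr1 hrk
end

section
/- (Upper bound on the expected sum of the ℓ largest order statistics) If 1 ≤ ℓ ≤ k and 2(ℓ−1) ≤ k, then the expected value of Y = ∑_{r=k−ℓ+1}^{k} X_{(r:k)} satisfies E[Y] ≤ ℓ·μ + (σ·√(2k)/2)·(2√ℓ − 1). -/
open MeasureTheory ProbabilityTheory

/-! If `X_{(r:k)} > c`, then at least `k - r + 1` of the `Xᵢ` exceed `c` by at least
`X_{(r:k)} - c`, so `(k - r + 1)(X_{(r:k)} - c) ≤ ∑ᵢ (Xᵢ - c)⁺` pointwise. Take `c = μ + s`: by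
symmetry `2 E(Xᵢ - μ - s)⁺ = E(|Xᵢ - μ| - s)⁺ ≤ E(Xᵢ - μ)² / (4s) = σ² / (4s)`, and optimizing over
`s > 0` gives `E X_{(r:k)} ≤ μ + σ √(k / (2(k - r + 1)))` for every `r`. Summing this over the `ℓ`
largest order statistics and comparing `∑_{j ≤ ℓ} 1/√j` with `∫ 1/√x` yields the bound. -/

theorem List.Pairwise.length_sub_nsmul_le_sum_map {α β : Type*} [Preorder α] [AddCommMonoid β]
    [PartialOrder β] [IsOrderedAddMonoid β] {l : List α} (hl : l.Pairwise (· ≤ ·))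
    {f : α → β} (hf : Monotone f) (hf0 : 0 ≤ f) {i : ℕ} (hi : i < l.length) :
    (l.length - i) • f l[i] ≤ (l.map f).sum := by
  induction l generalizing i with
  | nil => simp at hi
  | cons a t ih =>
    rw [List.pairwise_cons] at hl
    rw [List.map_cons, List.sum_cons]
    cases i with
    | zero =>
      have ht : t.length • f a ≤ (t.map f).sum := by
        simpa using (t.map f).card_nsmul_le_sum (f a)
          (by simpa using fun x hx => hf (hl.1 x hx))
      simpa [succ_nsmul'] using add_le_add (le_refl (f a)) ht
    | succ j =>
      simpa using (ih hl.2 (by simpa using hi)).trans (le_add_of_nonneg_left (hf0 a))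

theorem orderStat_sub_mul_le_sum_max {Ω : Type*} {k : ℕ} (X : Fin k → Ω → ℝ) {r : ℕ}
    (hr1 : 1 ≤ r) (hrk : r ≤ k) (c : ℝ) (ω : Ω) :
    ((k : ℝ) - r + 1) * (orderStat X r ω - c) ≤ ∑ i, max (X i ω - c) 0 := by
  classical
  set l := (List.ofFn fun i => X i ω).mergeSort (fun a b => decide (a ≤ b))
  have hlen : l.length = k := by simp [l]
  have hi : r - 1 < l.length := by omega
  have hf : Monotone fun x : ℝ => max (x - c) 0 := fun _ _ h =>
    max_le_max (sub_le_sub_right h c) le_rfl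
  have key := List.sortedLE_mergeSort.pairwise.length_sub_nsmul_le_sum_map hf
    (fun x => le_max_right (x - c) 0) hi
  have hsum : (l.map fun x => max (x - c) 0).sum = ∑ i, max (X i ω - c) 0 := by
    rw [(((List.ofFn fun i => X i ω).mergeSort_perm _).map _).sum_eq, List.map_ofFn,
      List.sum_ofFn]
    rfl
  have hstat : orderStat X r ω = l[r - 1] := List.getD_eq_getElem _ _ hi
  have hcast : (((l.length - (r - 1) : ℕ)) : ℝ) = (k : ℝ) - r + 1 := by
    rw [hlen, Nat.cast_sub (by omega), Nat.cast_sub hr1]; ring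
  rw [hsum, nsmul_eq_mul, hcast, ← hstat] at key
  calc ((k : ℝ) - r + 1) * (orderStat X r ω - c)
      ≤ ((k : ℝ) - r + 1) * max (orderStat X r ω - c) 0 := by
        gcongr
        · linarith [(Nat.cast_le.mpr hrk : (r : ℝ) ≤ k)]
        · exact le_max_left _ _
    _ ≤ _ := key

theorem max_sub_add_max_neg_sub_le_sq_div {z s : ℝ} (hs : 0 < s) :
    max (z - s) 0 + max (-z - s) 0 ≤ z ^ 2 / (4 * s) := by
  rw [le_div_iff₀ (by positivity)]
  rcases le_total z 0 with hz | hz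
  · rw [max_eq_right (by linarith : z - s ≤ 0), zero_add]
    rcases le_total (-z - s) 0 with h | h
    · rw [max_eq_right h]; nlinarith [sq_nonneg z]
    · rw [max_eq_left h]; nlinarith [sq_nonneg (z + 2 * s)]
  · rw [max_eq_right (by linarith : -z - s ≤ 0), add_zero]
    rcases le_total (z - s) 0 with h | h
    · rw [max_eq_right h]; nlinarith [sq_nonneg z]
    · rw [max_eq_left h]; nlinarith [sq_nonneg (z - 2 * s)]

theorem integral_max_sub_sub_le_variance_div_of_symm {Ω : Type*} [MeasurableSpace Ω]
    {P : Measure Ω} [IsFiniteMeasure P] {Y : Ω → ℝ} {μ s : ℝ} (hY : MemLp Y 2 P)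
    (hmean : ∫ ω, Y ω ∂P = μ) (hsym : IdentDistrib (fun ω => 2 * μ - Y ω) Y P P) (hs : 0 < s) :
    ∫ ω, max (Y ω - μ - s) 0 ∂P ≤ variance Y P / (8 * s) := by
  have hYint : Integrable Y P := hY.integrable one_le_two
  have hupper : Integrable (fun ω => max (Y ω - μ - s) 0) P :=
    ((hYint.sub (integrable_const μ)).sub (integrable_const s)).pos_part
  have hlower : Integrable (fun ω => max (-(Y ω - μ) - s) 0) P :=
    ((hYint.sub (integrable_const μ)).neg.sub (integrable_const s)).pos_part
  have hreflect : ∫ ω, max (-(Y ω - μ) - s) 0 ∂P = ∫ ω, max (Y ω - μ - s) 0 ∂P := by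
    have hg : Measurable fun x : ℝ => max (x - μ - s) 0 := by fun_prop
    have h := (hsym.comp hg).integral_eq
    simp only [Function.comp_def] at h
    convert h using 4
    ring
  have hvar : variance Y P = ∫ ω, (Y ω - μ) ^ 2 ∂P := by
    rw [variance_eq_integral hY.aemeasurable, hmean]
  have hpair : ∫ ω, (max (Y ω - μ - s) 0 + max (-(Y ω - μ) - s) 0) ∂P ≤ variance Y P / (4 * s) := by
    rw [hvar, ← integral_div]
    exact integral_mono (hupper.add hlower)
      ((hY.sub (memLp_const μ)).integrable_sq.div_const _)
      fun ω => max_sub_add_max_neg_sub_le_sq_div hs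
  rw [integral_add hupper hlower, hreflect] at hpair
  have : variance Y P / (4 * s) = 2 * (variance Y P / (8 * s)) := by ring
  linarith

theorem le_two_mul_sqrt_of_forall_le_add_div {x b : ℝ} (hb : 0 ≤ b)
    (h : ∀ s > 0, x ≤ s + b / s) : x ≤ 2 * √b := by
  rcases hb.eq_or_lt with rfl | hb
  · simpa using le_of_forall_pos_le_add fun s hs => by simpa using h s hs
  · have hsqrt : 0 < √b := Real.sqrt_pos.mpr hb
    simpa [Real.div_sqrt, two_mul] using h (√b) hsqrt

section OrderStatistics

variable {Ω : Type*} [MeasurableSpace Ω] {P : Measure Ω} [IsProbabilityMeasure P]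
  {k : ℕ} {X : Fin k → Ω → ℝ} {μ : ℝ}

theorem integral_orderStat_sub_le_add_div {v : ℝ} (hL2 : ∀ i, MemLp (X i) 2 P)
    (hmean : ∀ i, ∫ ω, X i ω ∂P = μ) (hvar : ∀ i, variance (X i) P = v)
    (hsym : ∀ i, IdentDistrib (fun ω => 2 * μ - X i ω) (X i) P P) {r : ℕ}
    (hint : Integrable (orderStat X r) P) (hr1 : 1 ≤ r) (hrk : r ≤ k) {s : ℝ} (hs : 0 < s) :
    ∫ ω, orderStat X r ω ∂P - μ ≤ s + k * v / (8 * ((k : ℝ) - r + 1)) / s := by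
  have hm : (0 : ℝ) < k - r + 1 := by linarith [(Nat.cast_le.mpr hrk : (r : ℝ) ≤ k)]
  have hexcess : ∀ i, Integrable (fun ω => max (X i ω - (μ + s)) 0) P := fun i =>
    (((hL2 i).integrable one_le_two).sub (integrable_const _)).pos_part
  have hpointwise : ∫ ω, ((k : ℝ) - r + 1) * (orderStat X r ω - (μ + s)) ∂P ≤
      ∫ ω, ∑ i, max (X i ω - (μ + s)) 0 ∂P :=
    integral_mono ((hint.sub (integrable_const _)).const_mul _)
      (integrable_finsetSum _ fun i _ => hexcess i)
      fun ω => orderStat_sub_mul_le_sum_max X hr1 hrk (μ + s) ω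
  have hexcess_le : ∀ i, ∫ ω, max (X i ω - (μ + s)) 0 ∂P ≤ v / (8 * s) := fun i => by
    simpa only [sub_add_eq_sub_sub, hvar i] using
      integral_max_sub_sub_le_variance_div_of_symm (hL2 i) (hmean i) (hsym i) hs
  rw [integral_const_mul, integral_sub hint (integrable_const _), integral_const, probReal_univ,
    one_smul, integral_finsetSum _ fun i _ => hexcess i] at hpointwise
  have hsum := (hpointwise.trans (Finset.sum_le_sum fun i _ => hexcess_le i))
  rw [Finset.sum_const, Finset.card_univ, Fintype.card_fin, nsmul_eq_mul] at hsum
  have : ∫ ω, orderStat X r ω ∂P - (μ + s) ≤ k * (v / (8 * s)) / ((k : ℝ) - r + 1) := by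
    rw [le_div_iff₀ hm]; linarith
  calc ∫ ω, orderStat X r ω ∂P - μ ≤ s + k * (v / (8 * s)) / ((k : ℝ) - r + 1) := by linarith
    _ = s + k * v / (8 * ((k : ℝ) - r + 1)) / s := by field_simp

theorem integral_orderStat_le {σ : ℝ} (hσ : 0 ≤ σ) (hL2 : ∀ i, MemLp (X i) 2 P)
    (hmean : ∀ i, ∫ ω, X i ω ∂P = μ) (hvar : ∀ i, variance (X i) P = σ ^ 2)
    (hsym : ∀ i, IdentDistrib (fun ω => 2 * μ - X i ω) (X i) P P) {r : ℕ}
    (hint : Integrable (orderStat X r) P) (hr1 : 1 ≤ r) (hrk : r ≤ k) :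
    ∫ ω, orderStat X r ω ∂P ≤ μ + σ * √(k / (2 * ((k : ℝ) - r + 1))) := by
  have hm : (0 : ℝ) < k - r + 1 := by linarith [(Nat.cast_le.mpr hrk : (r : ℝ) ≤ k)]
  have hopt := le_two_mul_sqrt_of_forall_le_add_div (by positivity) fun s hs =>
    integral_orderStat_sub_le_add_div hL2 hmean hvar hsym hint hr1 hrk hs
  have hsqrt : 2 * √(k * σ ^ 2 / (8 * ((k : ℝ) - r + 1))) =
      σ * √(k / (2 * ((k : ℝ) - r + 1))) := by
    rw [show k * σ ^ 2 / (8 * ((k : ℝ) - r + 1)) = (σ / 2) ^ 2 * (k / (2 * ((k : ℝ) - r + 1))) by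
      field_simp; ring, Real.sqrt_mul (by positivity), Real.sqrt_sq (by positivity)]
    ring
  linarith

end OrderStatistics

theorem sum_Icc_inv_sqrt_le {n : ℕ} (hn : 1 ≤ n) :
    ∑ j ∈ Finset.Icc 1 n, (√(j : ℝ))⁻¹ ≤ 2 * √(n : ℝ) - 1 := by
  induction n, hn using Nat.le_induction with
  | base => norm_num
  | succ n hn ih =>
    rw [Finset.sum_Icc_succ_top (by omega), Nat.cast_succ]
    have hpos : 0 < √((n : ℝ) + 1) := Real.sqrt_pos.mpr (by positivity)
    -- `2 (√(n+1) - √n) = 2 / (√(n+1) + √n)`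
    have hstep : (√((n : ℝ) + 1))⁻¹ ≤ 2 * √((n : ℝ) + 1) - 2 * √(n : ℝ) := by
      rw [inv_le_iff_one_le_mul₀' hpos]
      nlinarith [Real.sq_sqrt (n.cast_nonneg : (0 : ℝ) ≤ n),
        Real.sq_sqrt (by positivity : (0 : ℝ) ≤ n + 1),
        sq_nonneg (√((n : ℝ) + 1) - √(n : ℝ))]
    linarith

theorem sum_Icc_inv_sqrt_reflect {k ℓ : ℕ} (hℓk : ℓ ≤ k) :
    ∑ r ∈ Finset.Icc (k - ℓ + 1) k, (√((k : ℝ) - r + 1))⁻¹ =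
      ∑ j ∈ Finset.Icc 1 ℓ, (√(j : ℝ))⁻¹ :=
  Finset.sum_nbij' (fun r => k + 1 - r) (fun j => k + 1 - j)
    (fun r hr => by simp only [Finset.mem_Icc] at hr ⊢; omega)
    (fun j hj => by simp only [Finset.mem_Icc] at hj ⊢; omega)
    (fun r hr => by simp only [Finset.mem_Icc] at hr; omega)
    (fun j hj => by simp only [Finset.mem_Icc] at hj; omega)
    fun r hr => by
      simp only [Finset.mem_Icc] at hr
      rw [Nat.cast_sub (by omega), Nat.cast_succ]
      ring_nf

theorem sqrt_div_two_mul_eq (a : ℝ) {m : ℝ} (hm : 0 ≤ m) :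
    √(a / (2 * m)) = √(2 * a) / 2 * (√m)⁻¹ := by
  have hsqrt2 : √(2 : ℝ) ^ 2 = 2 := Real.sq_sqrt zero_le_two
  rw [Real.sqrt_div' _ (by positivity), Real.sqrt_mul' _ hm, Real.sqrt_mul zero_le_two]
  field_simp
  rw [hsqrt2]

theorem expected_sum_largest_upper_bound_general {Ω : Type*} [MeasureSpace Ω]
    [IsProbabilityMeasure (volume : Measure Ω)]
    {k : ℕ} (X : Fin k → Ω → ℝ) (μ σ : ℝ) (hσ : 0 ≤ σ)
    (hL2 : ∀ i, MemLp (X i) 2 volume)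
    (hmean : ∀ i, ∫ ω, X i ω = μ)
    (hvar : ∀ i, variance (X i) volume = σ ^ 2)
    (hsym : ∀ i, IdentDistrib (fun ω => 2 * μ - X i ω) (X i) volume volume)
    (hint : ∀ r, Integrable (orderStat X r) volume)
    (ℓ : ℕ) (hℓ1 : 1 ≤ ℓ) (hℓk : ℓ ≤ k) :
    ∫ ω, ∑ r ∈ Finset.Icc (k - ℓ + 1) k, orderStat X r ω ≤
      (ℓ : ℝ) * μ + σ * Real.sqrt (2 * (k : ℝ)) / 2 * (2 * Real.sqrt (ℓ : ℝ) - 1) := by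
  set C := σ * √(2 * (k : ℝ)) / 2
  have hterm : ∀ r ∈ Finset.Icc (k - ℓ + 1) k,
      ∫ ω, orderStat X r ω ≤ μ + C * (√((k : ℝ) - r + 1))⁻¹ := fun r hr => by
    rw [Finset.mem_Icc] at hr
    have hm : (0 : ℝ) ≤ k - r + 1 := by linarith [(Nat.cast_le.mpr hr.2 : (r : ℝ) ≤ k)]
    refine (integral_orderStat_le hσ hL2 hmean hvar hsym (hint r) (by omega) hr.2).trans_eq ?_
    rw [sqrt_div_two_mul_eq _ hm]
    ring
  rw [integral_finsetSum _ fun r _ => hint r]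
  calc ∑ r ∈ Finset.Icc (k - ℓ + 1) k, ∫ ω, orderStat X r ω
      ≤ ∑ r ∈ Finset.Icc (k - ℓ + 1) k, (μ + C * (√((k : ℝ) - r + 1))⁻¹) :=
        Finset.sum_le_sum hterm
    _ = ℓ * μ + C * ∑ j ∈ Finset.Icc 1 ℓ, (√(j : ℝ))⁻¹ := by
        rw [Finset.sum_add_distrib, Finset.sum_const, Nat.card_Icc, ← Finset.mul_sum,
          sum_Icc_inv_sqrt_reflect hℓk, nsmul_eq_mul, show k + 1 - (k - ℓ + 1) = ℓ by omega]
    _ ≤ ℓ * μ + C * (2 * √(ℓ : ℝ) - 1) := by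
        gcongr
        exact sum_Icc_inv_sqrt_le hℓ1

/-- Upper bound on the expected sum of the `ℓ` largest order statistics: if `1 ≤ ℓ ≤ k`
and `2(ℓ−1) ≤ k`, then `E[∑_{r=k−ℓ+1}^{k} X_{(r:k)}] ≤ ℓ·μ + (σ·√(2k)/2)·(2√ℓ − 1)`.
The Gascuel–Caraux per-term upper bound is taken as a hypothesis. -/
theorem expected_sum_largest_upper_bound {Ω : Type*} [MeasureSpace Ω]
    [IsProbabilityMeasure (volume : Measure Ω)]
    {k : ℕ} (hk : 1 ≤ k) (X : Fin k → Ω → ℝ) (μ σ : ℝ) (hσ : 0 ≤ σ)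
    (hmeas : ∀ i, AEMeasurable (X i) volume)
    (hL2 : ∀ i, MemLp (X i) 2 volume)
    (hident : ∀ i j, IdentDistrib (X i) (X j) volume volume)
    (hmean : ∀ i, ∫ ω, X i ω = μ)
    (hvar : ∀ i, variance (X i) volume = σ ^ 2)
    (hsym : ∀ i, IdentDistrib (fun ω => 2 * μ - X i ω) (X i) volume volume)
    (hint : ∀ r, Integrable (orderStat X r) volume)
    (hGC : ∀ r : ℕ, 1 ≤ r → r ≤ k → 2 * (r - 1) ≤ k →
      ∫ ω, orderStat X r ω ≤ μ + σ * Real.sqrt ((k : ℝ) / (2 * ((k : ℝ) - (r : ℝ) + 1))))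
    (ℓ : ℕ) (hℓ1 : 1 ≤ ℓ) (hℓk : ℓ ≤ k) (hℓ2 : 2 * (ℓ - 1) ≤ k) :
    ∫ ω, ∑ r ∈ Finset.Icc (k - ℓ + 1) k, orderStat X r ω ≤
      (ℓ : ℝ) * μ + σ * Real.sqrt (2 * (k : ℝ)) / 2 * (2 * Real.sqrt (ℓ : ℝ) - 1) :=
  expected_sum_largest_upper_bound_general X μ σ hσ hL2 hmean hvar hsym hint ℓ hℓ1 hℓk
end
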